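/- arXiv:2603.04164 — 2 statements merged into one kernel-verified Lean document; each statement's English description precedes it below -/
import Mathlib

section
/- Let r > 0, ε ∈ (0, r/4], η ∈ (0, ε], and fix x̃ ∈ ℝ^{d−1} with |x̃| < r. Set S₃ = √((r+ε)² − |x̃|²) and S₄ = √((r+ε+η)² − |x̃|²). Then there exist absolute constants c₁, c₂ > 0 (independent of r, ε, η, x̃, d) such that c₁ · η r / S₃ ≤ S₄ − S₃ ≤ c₂ · η r / S₃. -/
/-!
Write `u = (r+ε)² − |x̃|²` and `v = (r+ε+η)² − |x̃|²`, so that `S₃ = √u`, `S₄ = √v` and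
`S₄ − S₃ = (v − u)/(√u + √v)` with `v − u = η(2(r+ε)+η) ∈ [2rη, 11rη/4]`.
Since `|x̃| < r`, also `u > 2rε ≥ 2rη`, hence `v ≤ 4u` and `√u + √v` lies between `2√u` and `3√u`.
-/

namespace Real

variable {u v : ℝ}

theorem sqrt_sub_sqrt_eq_div (hu : 0 < u) (hv : 0 ≤ v) :
    √v - √u = (v - u) / (√u + √v) := by
  have hsum : 0 < √u + √v := by positivity
  rw [eq_div_iff hsum.ne']
  calc (√v - √u) * (√u + √v) = √v ^ 2 - √u ^ 2 := by ring
    _ = v - u := by rw [sq_sqrt hv, sq_sqrt hu.le]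

theorem sqrt_sub_sqrt_le_div (hu : 0 < u) (huv : u ≤ v) :
    √v - √u ≤ (v - u) / (2 * √u) := by
  rw [sqrt_sub_sqrt_eq_div hu (hu.le.trans huv)]
  have hsqrt : √u ≤ √v := sqrt_le_sqrt huv
  gcongr
  linarith

theorem div_le_sqrt_sub_sqrt (hu : 0 < u) (huv : u ≤ v) (hv : v ≤ 4 * u) :
    (v - u) / (3 * √u) ≤ √v - √u := by
  rw [sqrt_sub_sqrt_eq_div hu (hu.le.trans huv)]
  have hsqrt : √v ≤ 2 * √u := by
    rw [show 4 * u = 2 ^ 2 * u by norm_num] at hv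
    simpa [sqrt_mul', hu.le] using sqrt_le_sqrt hv
  gcongr
  linarith

end Real

/-- There are absolute constants c₁, c₂ > 0 such that for all d, r, ε, η, xt
as in the hypotheses, with S₃ = √((r+ε)²−|xt|²), S₄ = √((r+ε+η)²−|xt|²), one has
c₁·ηr/S₃ ≤ S₄ − S₃ ≤ c₂·ηr/S₃. -/
theorem stmt_4 :
    ∃ c₁ c₂ : ℝ, 0 < c₁ ∧ 0 < c₂ ∧
      ∀ (d : ℕ) (r ε η : ℝ), 0 < r → ε ∈ Set.Ioc 0 (r / 4) → η ∈ Set.Ioc 0 ε →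
        ∀ xt : EuclideanSpace ℝ (Fin (d - 1)), ‖xt‖ < r →
          c₁ * (η * r / Real.sqrt ((r + ε) ^ 2 - ‖xt‖ ^ 2)) ≤
              Real.sqrt ((r + ε + η) ^ 2 - ‖xt‖ ^ 2) -
                Real.sqrt ((r + ε) ^ 2 - ‖xt‖ ^ 2) ∧
            Real.sqrt ((r + ε + η) ^ 2 - ‖xt‖ ^ 2) -
                Real.sqrt ((r + ε) ^ 2 - ‖xt‖ ^ 2) ≤
              c₂ * (η * r / Real.sqrt ((r + ε) ^ 2 - ‖xt‖ ^ 2)) := by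
  refine ⟨2 / 3, 11 / 8, by norm_num, by norm_num, ?_⟩
  rintro d r ε η hr ⟨hε, hεr⟩ ⟨hη, hηε⟩ xt hxt
  set u := (r + ε) ^ 2 - ‖xt‖ ^ 2
  set v := (r + ε + η) ^ 2 - ‖xt‖ ^ 2
  have hdiff : v - u = η * (2 * (r + ε) + η) := by ring
  have hdiff_lower : 2 * r * η ≤ v - u := by rw [hdiff]; nlinarith
  have hdiff_upper : v - u ≤ 11 / 4 * r * η := by rw [hdiff]; nlinarith
  have hu_lower : 2 * r * η < u := by nlinarith [norm_nonneg xt]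
  have hu : 0 < u := (by positivity : 0 ≤ 2 * r * η).trans_lt hu_lower
  constructor
  · calc 2 / 3 * (η * r / √u) = 2 * r * η / (3 * √u) := by ring
      _ ≤ (v - u) / (3 * √u) := by gcongr
      _ ≤ √v - √u := Real.div_le_sqrt_sub_sqrt hu (by linarith) (by linarith)
  · calc √v - √u ≤ (v - u) / (2 * √u) := Real.sqrt_sub_sqrt_le_div hu (by linarith)
      _ ≤ 11 / 4 * r * η / (2 * √u) := by gcongr
      _ = 11 / 8 * (η * r / √u) := by ring
end

section
/- Let d ≥ 2, r > 0, 0 < η < r < (4/5)R, and let y, a ∈ ℝ^d with |y| < r and a ≠ 0. Let λ² = |y|² − ((a/|a|)·y)², and define v₊(ρ) = (1/|a|)(√(ρ² − λ²) − (a/|a|)·y) for ρ ∈ {R, R+η}. Then v₊(R) and v₊(R+η) are well defined (ρ² − λ² > 0), |y + a v₊(ρ)| = ρ, and η/|a| ≤ v₊(R+η) − v₊(R) ≤ 4η/|a|. -/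
open RealInnerProductSpace

private lemma aux_diff_bounds (R η s1 s2 : ℝ) (hη : 0 < η) (hR : 0 < R)
    (hprod : (s1 - s2) * (s1 + s2) = η * (2 * R + η))
    (hs1le : s1 ≤ R + η) (hs2le : s2 ≤ R)
    (hs1ge : (3/5) * (R + η) ≤ s1) (hs2ge : (3/5) * R ≤ s2) :
    η ≤ s1 - s2 ∧ s1 - s2 ≤ 4 * η := by
  constructor
  · nlinarith [hprod, hs1le, hs2le]
  · nlinarith [hprod, hs1ge, hs2ge]

/-- With λ² = |y|² − ((a/|a|)·y)² and
v₊(ρ) = (1/|a|)(√(ρ²−λ²) − (a/|a|)·y), the roots v₊(R), v₊(R+η) are well defined,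
|y + a v₊(ρ)| = ρ, and η/|a| ≤ v₊(R+η) − v₊(R) ≤ 4η/|a|. -/
theorem stmt_10 (d : ℕ) (hd : 2 ≤ d) (R r η : ℝ)
    (hη : 0 < η) (hηr : η < r) (hrR : r < (4 / 5) * R)
    (y a : EuclideanSpace ℝ (Fin d)) (hy : ‖y‖ < r) (ha : a ≠ 0)
    (lam2 : ℝ) (hlam2 : lam2 = ‖y‖ ^ 2 - ⟪‖a‖⁻¹ • a, y⟫ ^ 2)
    (vp : ℝ → ℝ)
    (hvp : ∀ ρ : ℝ, vp ρ =
      (1 / ‖a‖) * (Real.sqrt (ρ ^ 2 - lam2) - ⟪‖a‖⁻¹ • a, y⟫)) :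
    0 < R ^ 2 - lam2 ∧ 0 < (R + η) ^ 2 - lam2 ∧
      ‖y + vp R • a‖ = R ∧ ‖y + vp (R + η) • a‖ = R + η ∧
      η / ‖a‖ ≤ vp (R + η) - vp R ∧ vp (R + η) - vp R ≤ 4 * η / ‖a‖ := by
  have hna : (0:ℝ) < ‖a‖ := norm_pos_iff.mpr ha
  set t : ℝ := ⟪‖a‖⁻¹ • a, y⟫ with ht
  clear_value t
  have hR : 0 < R := by nlinarith
  have hyn : (0:ℝ) ≤ ‖y‖ := norm_nonneg y
  have hunit : ‖‖a‖⁻¹ • a‖ = 1 := by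
    rw [norm_smul, norm_inv, norm_norm]; field_simp
  have ht2 : t ^ 2 ≤ ‖y‖ ^ 2 := by
    have h1 : |⟪‖a‖⁻¹ • a, y⟫| ≤ ‖‖a‖⁻¹ • a‖ * ‖y‖ := abs_real_inner_le_norm _ _
    rw [hunit, one_mul, ← ht] at h1
    nlinarith [sq_abs t, abs_nonneg t]
  have hlam0 : 0 ≤ lam2 := by rw [hlam2]; linarith
  have hlamR : lam2 ≤ (16/25) * R ^ 2 := by rw [hlam2]; nlinarith
  have h1 : 0 < R ^ 2 - lam2 := by nlinarith
  have h2 : 0 < (R + η) ^ 2 - lam2 := by nlinarith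
  have hiat : ⟪a, y⟫ = ‖a‖ * t := by
    rw [ht, real_inner_smul_left]; field_simp
  -- norm computation
  have key : ∀ ρ : ℝ, 0 ≤ ρ → 0 ≤ ρ ^ 2 - lam2 → ‖y + vp ρ • a‖ = ρ := by
    intro ρ hρ hρ2
    set s : ℝ := Real.sqrt (ρ ^ 2 - lam2) with hs
    clear_value s
    have hs2 : s ^ 2 = ρ ^ 2 - lam2 := by rw [hs]; exact Real.sq_sqrt hρ2
    have hv : vp ρ * ‖a‖ = s - t := by
      rw [hvp ρ, ← hs]; field_simp
    have hnsq : ‖y + vp ρ • a‖ ^ 2 = ρ ^ 2 := by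
      rw [norm_add_sq_real, real_inner_smul_right, norm_smul, real_inner_comm,
        hiat]
      have hna' : ‖(vp ρ : ℝ)‖ * ‖a‖ = |vp ρ * ‖a‖| := by
        rw [abs_mul, Real.norm_eq_abs, abs_of_pos hna]
      rw [hna']
      have : |vp ρ * ‖a‖| ^ 2 = (s - t) ^ 2 := by rw [hv, sq_abs]
      rw [this]
      have hst : vp ρ * (‖a‖ * t) = (s - t) * t := by rw [← mul_assoc, hv]
      linear_combination 2 * hst + hs2 - hlam2
    have := congrArg Real.sqrt hnsq
    rwa [Real.sqrt_sq (norm_nonneg _), Real.sqrt_sq hρ] at this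
  clear ht hiat hunit hy hyn ht2 hd ha
  set s1 : ℝ := Real.sqrt ((R + η) ^ 2 - lam2) with hs1
  set s2 : ℝ := Real.sqrt (R ^ 2 - lam2) with hs2
  clear_value s1 s2
  have hs1sq : s1 ^ 2 = (R + η) ^ 2 - lam2 := by rw [hs1]; exact Real.sq_sqrt h2.le
  have hs2sq : s2 ^ 2 = R ^ 2 - lam2 := by rw [hs2]; exact Real.sq_sqrt h1.le
  have hs1n : 0 ≤ s1 := by rw [hs1]; exact Real.sqrt_nonneg _
  have hs2n : 0 ≤ s2 := by rw [hs2]; exact Real.sqrt_nonneg _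
  have hs2le : s2 ≤ R := by
    have := Real.sqrt_le_sqrt (show R ^ 2 - lam2 ≤ R ^ 2 by linarith)
    rwa [Real.sqrt_sq hR.le, ← hs2] at this
  have hs1le : s1 ≤ R + η := by
    have := Real.sqrt_le_sqrt (show (R + η) ^ 2 - lam2 ≤ (R + η) ^ 2 by linarith)
    rwa [Real.sqrt_sq (by linarith : (0:ℝ) ≤ R + η), ← hs1] at this
  have hs2ge : (3/5) * R ≤ s2 := by
    have h9 : ((3/5) * R) ^ 2 ≤ R ^ 2 - lam2 := by nlinarith
    have := Real.sqrt_le_sqrt h9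
    rwa [Real.sqrt_sq (by linarith : (0:ℝ) ≤ (3/5) * R), ← hs2] at this
  have hs1ge : (3/5) * (R + η) ≤ s1 := by
    have h9 : ((3/5) * (R + η)) ^ 2 ≤ (R + η) ^ 2 - lam2 := by nlinarith
    have := Real.sqrt_le_sqrt h9
    rwa [Real.sqrt_sq (by linarith : (0:ℝ) ≤ (3/5) * (R + η)), ← hs1] at this
  have hdiff : vp (R + η) - vp R = (s1 - s2) / ‖a‖ := by
    rw [hvp (R + η), hvp R, ← hs1, ← hs2]; ring
  have k1 := key R hR.le h1.le
  have k2 := key (R + η) (by linarith : (0:ℝ) ≤ R + η) h2.le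
  clear key hvp hlam2
  have hprod : (s1 - s2) * (s1 + s2) = η * (2 * R + η) := by
    linear_combination hs1sq - hs2sq
  obtain ⟨hlow, hup⟩ := aux_diff_bounds R η s1 s2 hη hR hprod hs1le hs2le hs1ge hs2ge
  refine ⟨h1, h2, k1, k2, ?_, ?_⟩
  · rw [hdiff]; gcongr
  · rw [hdiff]
    rw [show (4:ℝ) * η / ‖a‖ = (4 * η) / ‖a‖ by ring]
    gcongr
end
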